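/- For every integer e ≥ 2: if 1 ≤ n ≤ e then f_e(n) = 1, and if e < n ≤ 2e then f_e(n) = n − e + 1; here f_e(n) denotes the cardinality of the image under f_e of the set of partitions of n (note that f_e maps partitions of n to partitions of n). -/
import Mathlib


/-- `λ_{e,l}`: the subpartition of the partition `lam` (a multiset of positive
integers) formed by the parts `x` with `(l-1)e < x ≤ le`. -/
def subPartition (e l : ℕ) (lam : Multiset ℕ) : Multiset ℕ :=
  lam.filter (fun x => (l - 1) * e < x ∧ x ≤ l * e)

/-- `w_{e,l}(λ) = Σ_{x ∈ λ_{e,l}} (x - (l-1)e)`, the weight of `λ` at `(e,l)`. -/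
def partWeight (e l : ℕ) (lam : Multiset ℕ) : ℕ :=
  ((subPartition e l lam).map (fun x => x - (l - 1) * e)).sum

/-- `f_{e,l}(λ) = ℓ(λ_{e,l+1})·e − w_{e,l+1}(λ) + w_{e,l}(λ)`. -/
def fEL (e l : ℕ) (lam : Multiset ℕ) : ℕ :=
  Multiset.card (subPartition e (l + 1) lam) * e - partWeight e (l + 1) lam
    + partWeight e l lam

/-- The map `f_e` on partitions: `f_e(λ)` is the partition having exactly `f_{e,i}(λ)`
parts equal to `i`, for each `i ≥ 1`.  (For a partition `λ` of `n` and `e ≥ 1`, all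
parts `i` with `f_{e,i}(λ) ≠ 0` satisfy `1 ≤ i ≤ |λ| + 1`, so the cut-off below loses
nothing.) -/
def feMap (e : ℕ) (lam : Multiset ℕ) : Multiset ℕ :=
  ∑ i ∈ Finset.Icc 1 (lam.sum + 1), Multiset.replicate (fEL e i lam) i

lemma parts_le_n {n : ℕ} (lam : Nat.Partition n) {x : ℕ} (hx : x ∈ lam.parts) : x ≤ n := by
  have h := lam.parts_sum
  have := Multiset.single_le_sum (fun y _ => Nat.zero_le y) x hx
  omega

lemma subPartition_eq_zero {n e : ℕ} (l : ℕ) (lam : Nat.Partition n) (h : n ≤ (l - 1) * e) :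
    subPartition e l lam.parts = 0 := by
  rw [subPartition, Multiset.filter_eq_nil]
  intro x hx hc
  have := parts_le_n lam hx
  exact absurd hc.1 (by omega)

lemma partWeight_eq_zero {n e : ℕ} (l : ℕ) (lam : Nat.Partition n) (h : n ≤ (l - 1) * e) :
    partWeight e l lam.parts = 0 := by
  rw [partWeight, subPartition_eq_zero l lam h]
  simp

lemma key {n e : ℕ} (he : 2 ≤ e) (hn : 1 ≤ n) (h2 : n ≤ 2 * e) (lam : Nat.Partition n) :
    feMap e lam.parts =
      Multiset.replicate (n - 2 * partWeight e 2 lam.parts) 1 +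
      Multiset.replicate (partWeight e 2 lam.parts) 2 ∧
    (partWeight e 2 lam.parts = 0 ∨ e + partWeight e 2 lam.parts ≤ n) := by
  set W := partWeight e 2 lam.parts with hWdef
  -- decomposition
  have hdecomp : subPartition e 1 lam.parts + subPartition e 2 lam.parts = lam.parts := by
    rw [subPartition, subPartition]
    have := Multiset.filter_add_not (fun x => (1 - 1) * e < x ∧ x ≤ 1 * e) lam.parts
    conv_rhs => rw [← this]
    congr 1
    apply Multiset.filter_congr
    intro x hx
    have h1 := lam.parts_pos hx
    have h2' := parts_le_n lam hx
    constructor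
    · rintro ⟨ha, hb⟩; push_neg; intro; omega
    · intro h; push_neg at h; have := h (by omega); constructor <;> omega
  have hsum : (subPartition e 1 lam.parts).sum + (subPartition e 2 lam.parts).sum = n := by
    rw [← Multiset.sum_add, hdecomp, lam.parts_sum]
  have hw1 : partWeight e 1 lam.parts = (subPartition e 1 lam.parts).sum := by
    rw [partWeight]
    congr 1
    rw [show ((1:ℕ) - 1) * e = 0 by norm_num]
    simp
  -- card of S2 at most 1
  have hcard : Multiset.card (subPartition e 2 lam.parts) ≤ 1 := by
    by_contra hc
    push_neg at hc
    have hle : ∀ x ∈ subPartition e 2 lam.parts, e + 1 ≤ x := by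
      intro x hx
      have := (Multiset.of_mem_filter hx).1
      omega
    have := Multiset.card_nsmul_le_sum hle
    rw [smul_eq_mul] at this
    have hs2 : (subPartition e 2 lam.parts).sum ≤ n := by omega
    nlinarith [hc, this, hs2]
  have hW2 : (subPartition e 2 lam.parts).sum = Multiset.card (subPartition e 2 lam.parts) * e + W
      ∧ W ≤ Multiset.card (subPartition e 2 lam.parts) * e := by
    interval_cases h : Multiset.card (subPartition e 2 lam.parts)
    · have h0 : subPartition e 2 lam.parts = 0 := Multiset.card_eq_zero.1 h
      rw [hWdef, partWeight, h0]; simp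
    · obtain ⟨m, hm⟩ := Multiset.card_eq_one.1 h
      have hmem : m ∈ subPartition e 2 lam.parts := by rw [hm]; simp
      have hmprop := Multiset.of_mem_filter hmem
      rw [show ((2:ℕ) - 1) * e = e by norm_num, show (2:ℕ) * e = 2 * e from rfl] at hmprop
      rw [hWdef, partWeight, subPartition] at *
      rw [hm]
      simp only [Multiset.map_singleton, Multiset.sum_singleton, Multiset.card_singleton, one_mul]
      rw [show ((2:ℕ) - 1) * e = e by norm_num]
      omega
  have hS3 : ∀ l, 3 ≤ l → subPartition e l lam.parts = 0 := by
    intro l hl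
    apply subPartition_eq_zero
    have : 2 * e ≤ (l - 1) * e := Nat.mul_le_mul_right e (by omega)
    omega
  have hw3 : ∀ l, 3 ≤ l → partWeight e l lam.parts = 0 := by
    intro l hl
    apply partWeight_eq_zero
    have : 2 * e ≤ (l - 1) * e := Nat.mul_le_mul_right e (by omega)
    omega
  have hc01 : Multiset.card (subPartition e 2 lam.parts) = 0 ∨
      Multiset.card (subPartition e 2 lam.parts) = 1 := by omega
  have hf2 : fEL e 2 lam.parts = W := by
    rw [fEL, hS3 3 le_rfl, hw3 3 le_rfl]
    simp [hWdef]
  have hf1 : fEL e 1 lam.parts = n - 2 * W := by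
    rw [fEL, hw1, show (1:ℕ)+1 = 2 from rfl, ← hWdef]
    rcases hc01 with h | h <;> rw [h] at hW2 ⊢ <;> omega
  have hside : W = 0 ∨ e + W ≤ n := by
    rcases hc01 with h | h <;> rw [h] at hW2 <;> omega
  refine ⟨?_, hside⟩
  rw [feMap, lam.parts_sum]
  have hsub : ({1, 2} : Finset ℕ) ⊆ Finset.Icc 1 (n + 1) := by
    intro x hx
    simp only [Finset.mem_insert, Finset.mem_singleton] at hx
    simp only [Finset.mem_Icc]
    omega
  have hvanish : ∀ i ∈ Finset.Icc 1 (n + 1), i ∉ ({1, 2} : Finset ℕ) →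
      Multiset.replicate (fEL e i lam.parts) i = 0 := by
    intro i hi hni
    simp only [Finset.mem_insert, Finset.mem_singleton] at hni
    push_neg at hni
    have h3 : 3 ≤ i := by
      simp only [Finset.mem_Icc] at hi
      omega
    rw [fEL, hS3 (i+1) (by omega), hw3 (i+1) (by omega), hw3 i h3]
    simp
  rw [← Finset.sum_subset hsub hvanish,
    Finset.sum_pair (by norm_num : (1:ℕ) ≠ 2), hf1, hf2]


def bigPart (e n k : ℕ) (h : e + k ≤ n) (he : 1 ≤ e) : Nat.Partition n where
  parts := (e + k) ::ₘ Multiset.replicate (n - e - k) 1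
  parts_pos := by
    intro i hi
    rcases Multiset.mem_cons.1 hi with h' | h'
    · omega
    · have := Multiset.eq_of_mem_replicate h'
      omega
  parts_sum := by
    rw [Multiset.sum_cons, Multiset.sum_replicate, smul_eq_mul]
    omega

lemma W_bigPart (e n k : ℕ) (h : e + k ≤ n) (he : 2 ≤ e) (hn : n ≤ 2 * e) :
    partWeight e 2 (bigPart e n k h (by omega)).parts = k := by
  rw [partWeight, subPartition, bigPart, Multiset.filter_cons]
  have hrep : Multiset.filter (fun x => (2 - 1) * e < x ∧ x ≤ 2 * e)
      (Multiset.replicate (n - e - k) 1) = 0 := by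
    rw [Multiset.filter_eq_nil]
    intro a ha hc
    have := Multiset.eq_of_mem_replicate ha
    subst this
    omega
  rw [hrep, add_zero]
  by_cases hk : 1 ≤ k
  · rw [if_pos (by constructor <;> omega)]
    simp only [Multiset.map_singleton, Multiset.sum_singleton]
    omega
  · rw [if_neg (by omega)]
    simp only [Multiset.map_zero, Multiset.sum_zero]
    omega

/-- For every integer `e ≥ 2`, the number `f_e(n)` of distinct
images under `f_e` of the partitions of `n` satisfies: `f_e(n) = 1` for `1 ≤ n ≤ e`,
and `f_e(n) = n - e + 1` for `e < n ≤ 2e`. -/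
theorem stmt_19 (e : ℕ) (he : 2 ≤ e) (n : ℕ) :
    (1 ≤ n → n ≤ e →
      (Finset.univ.image (fun lam : Nat.Partition n => feMap e lam.parts)).card = 1) ∧
    (e < n → n ≤ 2 * e →
      (Finset.univ.image (fun lam : Nat.Partition n => feMap e lam.parts)).card
        = n - e + 1) := by
  constructor
  · intro hn hne
    have hconst : ∀ lam : Nat.Partition n, feMap e lam.parts = Multiset.replicate n 1 := by
      intro lam
      have h := (key he hn (by omega) lam).1
      have hz : partWeight e 2 lam.parts = 0 := by
        apply partWeight_eq_zero
        omega
      rw [h, hz]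
      simp
    rw [Finset.card_eq_one]
    refine ⟨Multiset.replicate n 1, ?_⟩
    rw [Finset.eq_singleton_iff_unique_mem]
    refine ⟨Finset.mem_image.2 ⟨Nat.Partition.indiscrete n, Finset.mem_univ _, hconst _⟩, ?_⟩
    rintro m hm
    obtain ⟨lam, -, rfl⟩ := Finset.mem_image.1 hm
    exact hconst lam
  · intro hlt hle
    have hn : 1 ≤ n := by omega
    set T : ℕ → Multiset ℕ :=
      fun w => Multiset.replicate (n - 2 * w) 1 + Multiset.replicate w 2 with hT
    have himg : Finset.univ.image (fun lam : Nat.Partition n => feMap e lam.parts)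
        = (Finset.range (n - e + 1)).image T := by
      ext m
      simp only [Finset.mem_image, Finset.mem_univ, true_and, Finset.mem_range]
      constructor
      · rintro ⟨lam, rfl⟩
        obtain ⟨hmap, hW⟩ := key he hn hle lam
        exact ⟨partWeight e 2 lam.parts, by omega, hmap.symm⟩
      · rintro ⟨w, hw, rfl⟩
        have hwle : e + w ≤ n := by omega
        refine ⟨bigPart e n w hwle (by omega), ?_⟩
        rw [(key he hn hle _).1, W_bigPart e n w hwle he hle]
    have hinj : Function.Injective T := by
      intro a b hab
      have := congrArg (Multiset.count 2) hab
      simpa [hT, Multiset.count_replicate] using this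
    rw [himg, Finset.card_image_of_injective _ hinj, Finset.card_range]
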